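/- (First Theorem of Dupin, supporting-hyperplane form.) Let d ≥ 2, let K ⊆ ℝ^d be a convex body and let δ ∈ (0, vol(K)). Then for all unit vectors ξ, η ∈ S^{d−1} one has C_δ(η) · ξ ≥ C_δ(ξ) · ξ; that is, the hyperplane through the center of buoyancy C_δ(ξ) orthogonal to ξ (which is parallel to the cutting hyperplane H(ξ)) supports the surface of centers S_δ at C_δ(ξ). -/

import Mathlib

/-!
Fix `ξ` and write `A` for the part of the body below `H(ξ)` and `B` for the part below `H(η)`.
Both have volume `δ`, so `A \ B` and `B \ A` have equal volume. The height `⟪x, ξ⟫` is at most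
`t ξ` on `A \ B` and at least `t ξ` on `B \ A`; hence `∫_A ⟪x, ξ⟫ ≤ ∫_B ⟪x, ξ⟫`, and dividing by
the common volume compares the centroids.
-/

open MeasureTheory Metric Set Filter
open scoped InnerProductSpace ENNReal Pointwise NNReal Topology

/-- The center of mass of a set `L` with respect to a measure `μ`. -/
noncomputable def centroid {d : ℕ} (μ : Measure (EuclideanSpace ℝ (Fin d)))
    (L : Set (EuclideanSpace ℝ (Fin d))) : EuclideanSpace ℝ (Fin d) :=
  (μ L).toReal⁻¹ • ∫ x in L, x ∂μ

/-- Bathtub principle: among sets of a given finite measure, a sublevel set of `f` minimizes the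
integral of `f`. -/
theorem setIntegral_le_setIntegral_of_sublevel {α : Type*} [MeasurableSpace α] {μ : Measure α}
    {f : α → ℝ} {A B : Set α} {c : ℝ} (hA : MeasurableSet A) (hB : MeasurableSet B)
    (hμ : μ A = μ B) (hμA : μ A ≠ ∞) (hfA : IntegrableOn f A μ) (hfB : IntegrableOn f B μ)
    (hf_le : ∀ x ∈ A, f x ≤ c) (hf_ge : ∀ x ∈ B \ A, c ≤ f x) :
    ∫ x in A, f x ∂μ ≤ ∫ x in B, f x ∂μ := by
  have hμB : μ B ≠ ∞ := hμ ▸ hμA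
  have hμ_sdiff : μ.real (A \ B) = μ.real (B \ A) := by
    rw [Measure.real, Measure.real, measure_sdiff_symm hA.nullMeasurableSet hB.nullMeasurableSet hμ
      (measure_ne_top_of_subset inter_subset_left hμA)]
  have hAB : ∫ x in A \ B, f x ∂μ ≤ μ.real (A \ B) • c := by
    rw [← setIntegral_const]
    exact setIntegral_mono_on (hfA.mono_set sdiff_subset)
      (integrableOn_const (measure_ne_top_of_subset sdiff_subset hμA)) (hA.diff hB)
      fun x hx => hf_le x hx.1
  have hBA : μ.real (B \ A) • c ≤ ∫ x in B \ A, f x ∂μ :=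
    setIntegral_ge_of_const_le (hB.diff hA) (measure_ne_top_of_subset sdiff_subset hμB) hf_ge
      (hfB.mono_set sdiff_subset)
  rw [← integral_inter_add_sdiff hB hfA, ← integral_inter_add_sdiff hA hfB, inter_comm B A]
  rw [hμ_sdiff] at hAB
  linarith

theorem inner_centroid {d : ℕ} (μ : Measure (EuclideanSpace ℝ (Fin d)))
    (L : Set (EuclideanSpace ℝ (Fin d))) (v : EuclideanSpace ℝ (Fin d))
    (hL : IntegrableOn (fun x => x) L μ) :
    ⟪centroid μ L, v⟫_ℝ = (μ L).toReal⁻¹ * ∫ x in L, ⟪x, v⟫_ℝ ∂μ := by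
  rw [centroid, real_inner_smul_left, real_inner_comm, ← integral_inner hL v]
  simp_rw [real_inner_comm v]

theorem inner_centroid_le_of_sublevel {d : ℕ} {μ : Measure (EuclideanSpace ℝ (Fin d))}
    [IsFiniteMeasureOnCompacts μ] {A B : Set (EuclideanSpace ℝ (Fin d))}
    {v : EuclideanSpace ℝ (Fin d)} {c : ℝ} (hA : IsCompact A) (hB : IsCompact B)
    (hμ : μ A = μ B) (hA_le : ∀ x ∈ A, ⟪x, v⟫_ℝ ≤ c) (hB_ge : ∀ x ∈ B \ A, c ≤ ⟪x, v⟫_ℝ) :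
    ⟪centroid μ A, v⟫_ℝ ≤ ⟪centroid μ B, v⟫_ℝ := by
  rw [inner_centroid μ A v (continuousOn_id.integrableOn_compact hA),
    inner_centroid μ B v (continuousOn_id.integrableOn_compact hB), hμ]
  have hheight : Continuous fun x : EuclideanSpace ℝ (Fin d) => ⟪x, v⟫_ℝ :=
    continuous_id.inner continuous_const
  refine mul_le_mul_of_nonneg_left ?_ (inv_nonneg.2 ENNReal.toReal_nonneg)
  exact setIntegral_le_setIntegral_of_sublevel hA.measurableSet hB.measurableSet hμ
    hA.measure_lt_top.ne (hheight.continuousOn.integrableOn_compact hA)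
    (hheight.continuousOn.integrableOn_compact hB) hA_le hB_ge

theorem dupin_first_supporting_hyperplane_general
    (d : ℕ)
    (K : Set (EuclideanSpace ℝ (Fin d)))
    (hKcomp : IsCompact K)
    (δ : ℝ)
    (t : EuclideanSpace ℝ (Fin d) → ℝ)
    (ht : ∀ ξ : EuclideanSpace ℝ (Fin d), ‖ξ‖ = 1 →
      volume (K ∩ {p | ⟪p, ξ⟫_ℝ ≤ t ξ}) = ENNReal.ofReal δ) :
    ∀ ξ η : EuclideanSpace ℝ (Fin d), ‖ξ‖ = 1 → ‖η‖ = 1 →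
      ⟪centroid volume (K ∩ {p | ⟪p, ξ⟫_ℝ ≤ t ξ}), ξ⟫_ℝ ≤
        ⟪centroid volume (K ∩ {p | ⟪p, η⟫_ℝ ≤ t η}), ξ⟫_ℝ := by
  intro ξ η hξ hη
  have hsubmerged : ∀ ζ, IsCompact (K ∩ {p | ⟪p, ζ⟫_ℝ ≤ t ζ}) := fun ζ =>
    hKcomp.inter_right (isClosed_le (continuous_id.inner continuous_const) continuous_const)
  refine inner_centroid_le_of_sublevel (hsubmerged ξ) (hsubmerged η)
    ((ht ξ hξ).trans (ht η hη).symm) (fun x hx => hx.2)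
    fun x hx => (not_le.1 fun hxξ => hx.2 ⟨hx.1.1, hxξ⟩).le

theorem dupin_first_supporting_hyperplane
    (d : ℕ) (hd : 2 ≤ d)
    (K : Set (EuclideanSpace ℝ (Fin d)))
    (hKcomp : IsCompact K) (hKconv : Convex ℝ K) (hKint : (interior K).Nonempty)
    (δ : ℝ) (hδ : 0 < δ) (hδK : ENNReal.ofReal δ < volume K)
    (t : EuclideanSpace ℝ (Fin d) → ℝ)
    (ht : ∀ ξ : EuclideanSpace ℝ (Fin d), ‖ξ‖ = 1 →
      volume (K ∩ {p | ⟪p, ξ⟫_ℝ ≤ t ξ}) = ENNReal.ofReal δ) :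
    ∀ ξ η : EuclideanSpace ℝ (Fin d), ‖ξ‖ = 1 → ‖η‖ = 1 →
      ⟪centroid volume (K ∩ {p | ⟪p, ξ⟫_ℝ ≤ t ξ}), ξ⟫_ℝ ≤
        ⟪centroid volume (K ∩ {p | ⟪p, η⟫_ℝ ≤ t η}), ξ⟫_ℝ :=
  dupin_first_supporting_hyperplane_general d K hKcomp δ t ht
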